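/- The associated Hermite polynomials of order 1 admit the expansion $H_{m-1}(\rho,1)=\sum_{k=1}^{m}\frac{i^{k-1}m!}{k!(m-k)!}H_{k-1}(i\rho)\,H_{m-k}(\rho)$ for all $m\ge 1$, where $H_n$ are the monic Hermite polynomials and $i=\sqrt{-1}$. -/

import Mathlib

open Finset

/-- Monic Hermite polynomials over ℂ: `x H_n = H_{n+1} + (n/2) H_{n-1}`. -/
noncomputable def hermC : ℕ → Polynomial ℂ
  | 0 => 1
  | 1 => Polynomial.X
  | (n + 2) => Polynomial.X * hermC (n + 1) - Polynomial.C (((n : ℂ) + 1) / 2) * hermC n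

/-- Monic associated Hermite polynomials of order 1:
`x H_n(x,1) = H_{n+1}(x,1) + ((n+1)/2) H_{n-1}(x,1)`, `H_0(x,1) = 1`, `H_1(x,1) = X`. -/
noncomputable def assocH1 : ℕ → Polynomial ℂ
  | 0 => 1
  | 1 => Polynomial.X
  | (n + 2) => Polynomial.X * assocH1 (n + 1) - Polynomial.C (((n : ℂ) + 2) / 2) * assocH1 n


/-!
Exponential generating functions turn the three-term recurrences into first-order linear ODEs.
With `G = ∑ Hₙ(ρ) tⁿ/n!` and `U = ∑ iⁿ Hₙ(iρ) tⁿ/n!` one has `G' = (ρ - t/2) G` and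
`U' = (-ρ + t/2) U`, hence `(U G)' = 0` and `U G = 1`. If `V` is the antiderivative of `U` with
`V(0) = 0`, then `W = V G` satisfies `W' = 1 + (ρ - t/2) W`, `W(0) = 0`, which coefficientwise is
the recurrence of `Hₙ(ρ, 1)`, shifted by one. The coefficients of `V G` are the binomial
convolution on the right-hand side.
-/

open PowerSeries
open scoped Nat

section EGF

variable {K : Type*} [Field K]

noncomputable def egf : (ℕ → K) →ₗ[K] K⟦X⟧ where
  toFun a := mk fun n => a n / (n ! : K)
  map_add' a b := by ext n; simp [add_div]
  map_smul' r a := by ext n; simp [mul_div_assoc]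

@[simp] lemma coeff_egf (a : ℕ → K) (n : ℕ) : coeff n (egf a) = a n / n ! := by
  simp [egf]

@[simp] lemma constantCoeff_egf (a : ℕ → K) : constantCoeff (egf a) = a 0 := by
  simp [← coeff_zero_eq_constantCoeff_apply]

def binomConv (a b : ℕ → K) (n : ℕ) : K :=
  ∑ k ∈ range (n + 1), (n.choose k : K) * a k * b (n - k)

/-- The monic three-term recurrence whose solution with `a 0 = 1` has EGF `exp (x t - c t² / 2)`.
At `n = 0` the truncated `a (n - 1) = a 0` is harmless: its coefficient vanishes. -/
def HermiteRec (x c : K) (a : ℕ → K) : Prop :=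
  ∀ n, a (n + 1) = x * a n - c * n * a (n - 1)

variable [CharZero K]

lemma egf_injective : Function.Injective (egf : (ℕ → K) → K⟦X⟧) := by
  intro a b h
  funext n
  simpa [Nat.factorial_ne_zero] using congrArg (coeff n) h

lemma derivative_egf (a : ℕ → K) : d⁄dX K (egf a) = egf fun n => a (n + 1) := by
  ext n
  rw [coeff_derivative, coeff_egf, coeff_egf, Nat.factorial_succ]
  push_cast
  field_simp

lemma X_mul_egf (a : ℕ → K) : X * egf a = egf fun n => n * a (n - 1) := by
  ext (_ | n)
  · simp
  · rw [coeff_succ_X_mul, coeff_egf, coeff_egf, Nat.factorial_succ]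
    push_cast
    field_simp

lemma egf_single_zero_one : egf (Pi.single 0 1) = (1 : K⟦X⟧) := by
  ext (_ | n) <;> simp [coeff_one]

lemma egf_mul_egf (a b : ℕ → K) : egf a * egf b = egf (binomConv a b) := by
  ext n
  rw [coeff_mul, Nat.sum_antidiagonal_eq_sum_range_succ_mk, coeff_egf, binomConv, sum_div]
  refine sum_congr rfl fun k hk => ?_
  rw [Nat.cast_choose K (Nat.lt_succ_iff.mp (mem_range.mp hk))]
  simp only [coeff_egf]
  field_simp [Nat.factorial_ne_zero]

lemma binomConv_eq_sum_Icc {a : ℕ → K} (ha0 : a 0 = 0) (b : ℕ → K) (n : ℕ) :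
    binomConv a b n = ∑ k ∈ Icc 1 n, a k * n ! / (k ! * (n - k)!) * b (n - k) := by
  rw [binomConv, sum_range_eq_add_Ico _ n.succ_pos, ha0, mul_zero, zero_mul, zero_add]
  refine sum_congr rfl fun k hk => ?_
  rw [Nat.cast_choose K (by simp at hk; omega)]
  ring

lemma derivative_egf_eq_iff {x c : K} {a b : ℕ → K} :
    d⁄dX K (egf a) = (C x - C c * X) * egf a + egf b ↔
      ∀ n, a (n + 1) = x * a n - c * n * a (n - 1) + b n := by
  have : (C x - C c * X) * egf a = egf (x • a - c • fun n => n * a (n - 1)) := by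
    rw [map_sub, map_smul, map_smul, ← X_mul_egf, smul_eq_C_mul, smul_eq_C_mul]
    ring
  rw [derivative_egf, this, ← map_add, egf_injective.eq_iff, funext_iff]
  simp [mul_assoc]

variable {x c : K} {p q : ℕ → K}

lemma HermiteRec.derivative_egf (hp : HermiteRec x c p) :
    d⁄dX K (egf p) = (C x - C c * X) * egf p := by
  simpa using (derivative_egf_eq_iff (x := x) (c := c) (b := 0)).mpr fun n => by simp [hp n]

lemma HermiteRec.egf_mul_egf_eq_one (hp0 : p 0 = 1) (hp : HermiteRec x c p) (hq0 : q 0 = 1)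
    (hq : HermiteRec (-x) (-c) q) : egf q * egf p = 1 := by
  refine derivative.ext ?_ (by simp [hp0, hq0])
  rw [Derivation.leibniz, hp.derivative_egf, hq.derivative_egf, derivative_one,
    map_neg, map_neg, smul_eq_mul, smul_eq_mul]
  ring

lemma HermiteRec.binomConv_succ (hp0 : p 0 = 1) (hp : HermiteRec x c p) (hq0 : q 0 = 1)
    (hq : HermiteRec (-x) (-c) q) {v : ℕ → K} (hv : ∀ n, v (n + 1) = q n) (n : ℕ) :
    binomConv v p (n + 1) =
      x * binomConv v p n - c * n * binomConv v p (n - 1) + (Pi.single 0 1 : ℕ → K) n := by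
  revert n
  rw [← derivative_egf_eq_iff, ← egf_mul_egf, egf_single_zero_one, Derivation.leibniz,
    hp.derivative_egf, _root_.derivative_egf, funext hv, smul_eq_mul, smul_eq_mul,
    mul_comm (egf p), hp.egf_mul_egf_eq_one hp0 hq0 hq]
  ring

lemma HermiteRec.eq_binomConv_succ (hp0 : p 0 = 1) (hp : HermiteRec x c p) (hq0 : q 0 = 1)
    (hq : HermiteRec (-x) (-c) q) {v : ℕ → K} (hv0 : v 0 = 0) (hv : ∀ n, v (n + 1) = q n)
    {A : ℕ → K} (hA0 : A 0 = 1) (hA1 : A 1 = x)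
    (hA : ∀ n, A (n + 2) = x * A (n + 1) - c * (n + 2) * A n) (n : ℕ) :
    A n = binomConv v p (n + 1) := by
  have hw := hp.binomConv_succ hp0 hq0 hq hv
  have hw0 : binomConv v p 0 = 0 := by simp [binomConv, hv0]
  induction n using Nat.twoStepInduction with
  | zero => simp [hw 0, hw0, hA0]
  | one => simp [hw 1, hw 0, hw0, hA1]
  | more n ih0 ih1 =>
    rw [hA, ih0, ih1, hw (n + 2), Pi.single_eq_of_ne (by omega), add_zero]
    push_cast
    ring_nf

end EGF

lemma hermiteRec_hermC_eval (x : ℂ) : HermiteRec x (1 / 2) fun n => (hermC n).eval x := by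
  rintro (_ | n)
  · simp [hermC]
  · simp only [hermC, Polynomial.eval_sub, Polynomial.eval_mul, Polynomial.eval_X,
      Polynomial.eval_C, Nat.add_sub_cancel]
    push_cast
    ring

lemma hermiteRec_I_pow_mul_hermC_eval_I_mul (ρ : ℂ) :
    HermiteRec (-ρ) (-(1 / 2)) fun n => Complex.I ^ n * (hermC n).eval (Complex.I * ρ) := by
  intro n
  have hn := hermiteRec_hermC_eval (Complex.I * ρ) n
  beta_reduce at hn ⊢
  rw [hn]
  cases n with
  | zero => linear_combination ρ * (hermC 0).eval (Complex.I * ρ) * Complex.I_sq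
  | succ k =>
    rw [Nat.add_sub_cancel, pow_succ, pow_succ]
    push_cast
    linear_combination (Complex.I ^ k * Complex.I * ρ * (hermC (k + 1)).eval (Complex.I * ρ)
      - 1 / 2 * (k + 1) * Complex.I ^ k * (hermC k).eval (Complex.I * ρ)) * Complex.I_sq

lemma assocH1_eval_add_two (ρ : ℂ) (n : ℕ) :
    (assocH1 (n + 2)).eval ρ
      = ρ * (assocH1 (n + 1)).eval ρ - 1 / 2 * (n + 2) * (assocH1 n).eval ρ := by
  simp only [assocH1, Polynomial.eval_sub, Polynomial.eval_mul, Polynomial.eval_X,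
    Polynomial.eval_C]
  ring

/-- `H_{m-1}(ρ,1) = ∑_{k=1}^{m} i^{k-1} m!/(k!(m-k)!) H_{k-1}(iρ) H_{m-k}(ρ)` for `m ≥ 1`. -/
theorem stmt19 (m : ℕ) (hm : 1 ≤ m) (ρ : ℂ) :
    (assocH1 (m - 1)).eval ρ
      = ∑ k ∈ Finset.Icc 1 m,
          Complex.I ^ (k - 1) * (m.factorial : ℂ) / ((k.factorial : ℂ) * ((m - k).factorial : ℂ))
            * (hermC (k - 1)).eval (Complex.I * ρ) * (hermC (m - k)).eval ρ := by
  obtain ⟨n, rfl⟩ : ∃ n, m = n + 1 := ⟨m - 1, by omega⟩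
  rw [Nat.add_sub_cancel, (hermiteRec_hermC_eval ρ).eq_binomConv_succ (by simp [hermC])
    (by simp [hermC]) (hermiteRec_I_pow_mul_hermC_eval_I_mul ρ)
    (v := fun k => if k = 0 then 0 else Complex.I ^ (k - 1) * (hermC (k - 1)).eval (Complex.I * ρ))
    (by simp) (by simp) (A := fun k => (assocH1 k).eval ρ) (by simp [assocH1])
    (by simp [assocH1]) (assocH1_eval_add_two ρ), binomConv_eq_sum_Icc (by simp)]
  refine sum_congr rfl fun k hk => ?_
  rw [if_neg (by simp at hk; omega)]
  ring
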